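/- arXiv:1811.12770 — 2 statements merged into one kernel-verified Lean document; each statement's English description precedes it below -/
import Mathlib

section
/- Optimizing the bound ‖u‖_2^2 ≤ A R^d + B R^{-2} over R > 0, where A = (2π)^{-d} ω_d ‖u‖_1^2 and B = ‖∇u‖_2^2, yields Nash's inequality ‖u‖_2^{2+4/d} ≤ C_2(d) ‖u‖_1^{4/d} ‖∇u‖_2^2 with C_2(d) = (1/(4π)) ((d+2)/d)^{1+2/d} Γ(d/2)^{-2/d}. -/
open MeasureTheory Real Filter

/-! If `X ≤ A R^a + B R^(-b)` for all `R > 0`, take `R = R₀` with `R₀^(a+b) = bB/(aA)`, the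
minimiser, to get `X ≤ ((a+b)/b) A R₀^a`; raising this to the power `(a+b)/a` turns `R₀^a` into
`bB/(aA)` and eliminates `R`. For `a = d`, `b = 2`, `X = ‖u‖₂²`, write `Γ(d/2+1) = (d/2) Γ(d/2)`
in `ω_d`: the resulting `(d/2)^(-2/d)` combines with `((d+2)/2)^((d+2)/d) (2/d)` into
`((d+2)/d)^(1+2/d)`. -/

noncomputable def nrm (d : ℕ) (u : EuclideanSpace ℝ (Fin d) → ℝ) (q : ℝ) : ℝ :=
  (eLpNorm u (ENNReal.ofReal q) volume).toReal

noncomputable def gradNrm (d : ℕ) (u : EuclideanSpace ℝ (Fin d) → ℝ) : ℝ :=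
  (eLpNorm (fun x => ‖fderiv ℝ u x‖) 2 volume).toReal

theorem nonpos_of_forall_le_mul_rpow_neg {X B b : ℝ} (hb : 0 < b)
    (h : ∀ R : ℝ, 0 < R → X ≤ B * R ^ (-b)) : X ≤ 0 := by
  have hlim : Tendsto (fun R : ℝ => B * R ^ (-b)) atTop (nhds 0) := by
    simpa using (tendsto_rpow_neg_atTop hb).const_mul B
  exact ge_of_tendsto hlim ((eventually_gt_atTop 0).mono h)

theorem nonpos_of_forall_le_mul_rpow {X A a : ℝ} (ha : 0 < a)
    (h : ∀ R : ℝ, 0 < R → X ≤ A * R ^ a) : X ≤ 0 :=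
  nonpos_of_forall_le_mul_rpow_neg ha fun R hR => by
    simpa [rpow_neg hR.le, inv_rpow hR.le] using h R⁻¹ (inv_pos.2 hR)

theorem rpow_le_of_forall_le_add_rpow_of_pos {X A B a b : ℝ} (ha : 0 < a) (hb : 0 < b)
    (hA : 0 < A) (hB : 0 < B) (hX : 0 ≤ X)
    (h : ∀ R : ℝ, 0 < R → X ≤ A * R ^ a + B * R ^ (-b)) :
    X ^ ((a + b) / a) ≤ ((a + b) / b) ^ ((a + b) / a) * (b / a) * A ^ (b / a) * B := by
  set K := b * B / (a * A) with hK
  have hK0 : 0 < K := by positivity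
  set R₀ := K ^ (1 / (a + b))
  have hR₀ : 0 < R₀ := rpow_pos_of_pos hK0 _
  have hR₀pow : R₀ ^ (a + b) = K := by
    rw [← rpow_mul hK0.le, one_div_mul_cancel (by positivity), rpow_one]
  -- at the minimiser the two terms are in the ratio b : a
  have hbalance : B * R₀ ^ (-b) = a / b * (A * R₀ ^ a) := by
    rw [show -b = a + -(a + b) by ring, rpow_add hR₀, rpow_neg hR₀.le, hR₀pow, hK]
    field_simp
  have hmin : X ≤ (a + b) / b * A * R₀ ^ a := by
    have := h R₀ hR₀
    rw [hbalance] at this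
    field_simp at this ⊢
    linarith
  calc X ^ ((a + b) / a) ≤ ((a + b) / b * A * R₀ ^ a) ^ ((a + b) / a) :=
        rpow_le_rpow hX hmin (by positivity)
    _ = ((a + b) / b) ^ ((a + b) / a) * A ^ ((a + b) / a) * K := by
        rw [mul_rpow (by positivity) (by positivity), mul_rpow (by positivity) hA.le,
          ← rpow_mul hR₀.le, mul_div_cancel₀ _ ha.ne', hR₀pow]
    _ = ((a + b) / b) ^ ((a + b) / a) * (b / a) * A ^ (b / a) * B := by
        have hApow : A ^ ((a + b) / a) = A * A ^ (b / a) := by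
          rw [add_div, div_self ha.ne', rpow_add hA, rpow_one]
        rw [hApow, hK]
        field_simp

theorem rpow_le_of_forall_le_add_rpow {X A B a b : ℝ} (ha : 0 < a) (hb : 0 < b)
    (hA : 0 ≤ A) (hB : 0 ≤ B) (hX : 0 ≤ X)
    (h : ∀ R : ℝ, 0 < R → X ≤ A * R ^ a + B * R ^ (-b)) :
    X ^ ((a + b) / a) ≤ ((a + b) / b) ^ ((a + b) / a) * (b / a) * A ^ (b / a) * B := by
  rcases hX.eq_or_lt with rfl | hX
  · rw [zero_rpow (by positivity)]
    positivity
  rcases hA.eq_or_lt with rfl | hA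
  · exact absurd (nonpos_of_forall_le_mul_rpow_neg hb fun R hR => by simpa using h R hR) hX.not_ge
  rcases hB.eq_or_lt with rfl | hB
  · exact absurd (nonpos_of_forall_le_mul_rpow ha fun R hR => by simpa using h R hR) hX.not_ge
  exact rpow_le_of_forall_le_add_rpow_of_pos ha hb hA hB hX.le h

theorem rpow_two_div_fourier_ball_const {d N : ℝ} (hd : 0 < d) (hN : 0 ≤ N) :
    ((2 * π) ^ (-d) * (π ^ (d / 2) / Gamma (d / 2 + 1)) * N ^ 2) ^ (2 / d) =
      (4 * π)⁻¹ * (d / 2) ^ (-2 / d) * Gamma (d / 2) ^ (-2 / d) * N ^ (4 / d) := by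
  have hΓ : 0 < Gamma (d / 2) := Gamma_pos_of_pos (by positivity)
  rw [Gamma_add_one (by positivity), mul_rpow (by positivity) (by positivity),
    mul_rpow (by positivity) (by positivity), div_rpow (by positivity) (by positivity),
    mul_rpow (by positivity) hΓ.le, ← rpow_mul (by positivity), ← rpow_mul pi_pos.le,
    ← rpow_natCast N 2, ← rpow_mul hN]
  have e1 : -d * (2 / d) = -2 := by field_simp
  have e2 : d / 2 * (2 / d) = 1 := by field_simp
  have e3 : ((2 : ℕ) : ℝ) * (2 / d) = 4 / d := by push_cast; ring
  rw [e1, e2, e3, rpow_one, rpow_neg (by positivity), rpow_two, neg_div,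
    rpow_neg (by positivity), rpow_neg hΓ.le]
  field_simp
  ring

theorem nash_constant_eq {d : ℝ} (hd : 0 < d) :
    ((d + 2) / 2) ^ ((d + 2) / d) * (2 / d) * (d / 2) ^ (-2 / d) =
      ((d + 2) / d) ^ (1 + 2 / d) := by
  have hscale : 2 / d * (d / 2) ^ (-2 / d) = ((d / 2) ^ ((d + 2) / d))⁻¹ := by
    rw [← rpow_neg (by positivity), show -((d + 2) / d) = -1 + -2 / d by field_simp; ring,
      rpow_add (by positivity), rpow_neg_one, inv_div]
  rw [mul_assoc, hscale, ← div_eq_mul_inv, ← div_rpow (by positivity) (by positivity)]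
  congr 1 <;> field_simp

theorem nash_from_fourier_optimization_general (d : ℕ) (hd : 1 ≤ d)
    (u : EuclideanSpace ℝ (Fin d) → ℝ)
    (A B : ℝ)
    (hA : A = (2 * π) ^ (-(d : ℝ)) * (π ^ ((d : ℝ) / 2) / Real.Gamma ((d : ℝ) / 2 + 1))
            * nrm d u 1 ^ 2)
    (hB : B = gradNrm d u ^ 2)
    (hbound : ∀ R : ℝ, 0 < R → nrm d u 2 ^ 2 ≤ A * R ^ (d : ℝ) + B * R ^ (-(2 : ℝ))) :
    nrm d u 2 ^ ((2 : ℝ) + 4 / d) ≤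
      (1 / (4 * π)) * (((d : ℝ) + 2) / d) ^ ((1 : ℝ) + 2 / d)
        * Real.Gamma ((d : ℝ) / 2) ^ (-(2 : ℝ) / d)
        * nrm d u 1 ^ ((4 : ℝ) / d) * gradNrm d u ^ 2 := by
  have hd0 : (0 : ℝ) < d := by exact_mod_cast hd
  have hn1 : 0 ≤ nrm d u 1 := ENNReal.toReal_nonneg
  have hn2 : 0 ≤ nrm d u 2 := ENNReal.toReal_nonneg
  have hA0 : 0 ≤ A := by
    have := Gamma_pos_of_pos (by positivity : (0 : ℝ) < d / 2 + 1)
    rw [hA]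
    positivity
  have hB0 : 0 ≤ B := hB ▸ sq_nonneg _
  have hopt := rpow_le_of_forall_le_add_rpow hd0 two_pos hA0 hB0 (sq_nonneg _) hbound
  calc nrm d u 2 ^ ((2 : ℝ) + 4 / d) = (nrm d u 2 ^ 2) ^ (((d : ℝ) + 2) / d) := by
        rw [← rpow_natCast, ← rpow_mul hn2]
        congr 1
        field_simp
        ring
    _ ≤ _ := hopt
    _ = _ := by
        rw [hA, hB, rpow_two_div_fourier_ball_const hd0 hn1, ← nash_constant_eq hd0]
        ring

/-- Optimizing `‖u‖₂² ≤ A R^d + B R^{-2}` over `R > 0`, with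
`A = (2π)^{-d} ω_d ‖u‖₁²` and `B = ‖∇u‖₂²`, `ω_d = π^{d/2}/Γ(d/2+1)`, yields Nash's
inequality with constant `C₂(d) = (1/(4π)) ((d+2)/d)^{1+2/d} Γ(d/2)^{-2/d}`. -/
theorem nash_from_fourier_optimization (d : ℕ) (hd : 1 ≤ d)
    (u : EuclideanSpace ℝ (Fin d) → ℝ)
    (hu1 : MemLp u 1 volume) (hu2 : MemLp u 2 volume)
    (hgrad : MemLp (fun x => ‖fderiv ℝ u x‖) 2 volume)
    (A B : ℝ)
    (hA : A = (2 * π) ^ (-(d : ℝ)) * (π ^ ((d : ℝ) / 2) / Real.Gamma ((d : ℝ) / 2 + 1))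
            * nrm d u 1 ^ 2)
    (hB : B = gradNrm d u ^ 2)
    (hbound : ∀ R : ℝ, 0 < R → nrm d u 2 ^ 2 ≤ A * R ^ (d : ℝ) + B * R ^ (-(2 : ℝ))) :
    nrm d u 2 ^ ((2 : ℝ) + 4 / d) ≤
      (1 / (4 * π)) * (((d : ℝ) + 2) / d) ^ ((1 : ℝ) + 2 / d)
        * Real.Gamma ((d : ℝ) / 2) ^ (-(2 : ℝ) / d)
        * nrm d u 1 ^ ((4 : ℝ) / d) * gradNrm d u ^ 2 :=
  nash_from_fourier_optimization_general d hd u A B hA hB hbound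
end

section
/- Let u be a nonzero function in L^1(ℝ^d) ∩ L^2(ℝ^d). Then log(‖u‖_2^2 / ‖u‖_1) ≤ ∫_{ℝ^d} log|u| · |u|^2 dx / ‖u‖_2^2, provided the right-hand integral exists. -/
open MeasureTheory Real

section

variable {α : Type*} [MeasurableSpace α] {μ : Measure α} {f : α → ℝ}

lemma sq_lpNorm_two (hf : AEStronglyMeasurable f μ) : lpNorm f 2 μ ^ 2 = ∫ x, f x ^ 2 ∂μ := by
  have hnonneg : 0 ≤ ∫ x, f x ^ 2 ∂μ := integral_nonneg fun x ↦ sq_nonneg _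
  rw [lpNorm_eq_integral_norm_rpow_toReal two_ne_zero ENNReal.ofNat_ne_top hf]
  simp only [ENNReal.toReal_ofNat, rpow_two, norm_eq_abs, sq_abs]
  rw [← rpow_natCast, ← rpow_mul hnonneg]
  norm_num

lemma log_add_one_mul_sq_sub_le_log_abs_mul_sq {c : ℝ} (hc : 0 < c) (a : ℝ) :
    (log c + 1) * a ^ 2 - c * |a| ≤ log |a| * a ^ 2 := by
  rcases eq_or_ne a 0 with rfl | ha
  · simp
  have habs : 0 < |a| := abs_pos.mpr ha
  have htangent : log c - log |a| ≤ c / |a| - 1 := by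
    rw [← log_div hc.ne' habs.ne']
    exact log_le_sub_one_of_pos (div_pos hc habs)
  have hweighted := mul_le_mul_of_nonneg_right htangent (sq_nonneg |a|)
  have hcancel : c / |a| * |a| ^ 2 = c * |a| := by field_simp
  rw [sub_one_mul, hcancel, sq_abs] at hweighted
  linarith

lemma integral_abs_pos_of_integral_sq_pos (hf : Integrable f μ) (hsq : 0 < ∫ x, f x ^ 2 ∂μ) :
    0 < ∫ x, |f x| ∂μ := by
  refine (integral_nonneg fun x ↦ abs_nonneg (f x)).lt_of_ne fun hzero ↦ hsq.ne' ?_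
  have hf_zero : f =ᵐ[μ] 0 := by
    filter_upwards [(integral_eq_zero_iff_of_nonneg (fun x ↦ abs_nonneg (f x)) hf.abs).mp
      hzero.symm] with x hx
    exact abs_eq_zero.mp hx
  rw [integral_eq_zero_of_ae]
  filter_upwards [hf_zero] with x hx
  simp [hx]

lemma log_integral_sq_div_integral_abs_le (hf : Integrable f μ)
    (hf_sq : Integrable (fun x ↦ f x ^ 2) μ) (hf_log : Integrable (fun x ↦ log |f x| * f x ^ 2) μ)
    (hpos : 0 < ∫ x, f x ^ 2 ∂μ) :
    log ((∫ x, f x ^ 2 ∂μ) / ∫ x, |f x| ∂μ) ≤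
      (∫ x, log |f x| * f x ^ 2 ∂μ) / ∫ x, f x ^ 2 ∂μ := by
  set I₂ := ∫ x, f x ^ 2 ∂μ
  set I₁ := ∫ x, |f x| ∂μ
  have hI₁ : 0 < I₁ := integral_abs_pos_of_integral_sq_pos hf hpos
  have hc : 0 < I₂ / I₁ := div_pos hpos hI₁
  have htangent : (log (I₂ / I₁) + 1) * I₂ - I₂ / I₁ * I₁ ≤ ∫ x, log |f x| * f x ^ 2 ∂μ := by
    rw [← integral_const_mul, ← integral_const_mul,
      ← integral_sub (hf_sq.const_mul _) (hf.abs.const_mul _)]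
    exact integral_mono ((hf_sq.const_mul _).sub (hf.abs.const_mul _)) hf_log
      fun x ↦ log_add_one_mul_sq_sub_le_log_abs_mul_sq hc (f x)
  rw [div_mul_cancel₀ _ hI₁.ne'] at htangent
  rw [le_div_iff₀ hpos]
  linarith

end

theorem beckner_jensen_general (d : ℕ)
    (u : EuclideanSpace ℝ (Fin d) → ℝ)
    (hu1 : MemLp u 1 volume) (hu2 : MemLp u 2 volume)
    (hne : nrm d u 2 ≠ 0)
    (hint : Integrable (fun x => Real.log |u x| * (u x) ^ 2) volume) :
    Real.log (nrm d u 2 ^ 2 / nrm d u 1) ≤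
      (∫ x, Real.log |u x| * (u x) ^ 2) / nrm d u 2 ^ 2 := by
  have hmeas := hu2.aestronglyMeasurable
  have hnrm₂ : nrm d u 2 ^ 2 = ∫ x, u x ^ 2 := by
    rw [nrm, ENNReal.ofReal_ofNat, toReal_eLpNorm hmeas, sq_lpNorm_two hmeas]
  have hnrm₁ : nrm d u 1 = ∫ x, |u x| := by
    rw [nrm, ENNReal.ofReal_one, toReal_eLpNorm hmeas, lpNorm_one_eq_integral_norm hmeas]
    rfl
  have hpos : 0 < ∫ x, u x ^ 2 := hnrm₂ ▸ pow_pos (ENNReal.toReal_nonneg.lt_of_ne' hne) 2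
  rw [hnrm₂, hnrm₁]
  exact log_integral_sq_div_integral_abs_le (memLp_one_iff_integrable.mp hu1) hu2.integrable_sq
    hint hpos

/-- Beckner's Jensen-inequality observation: for a nonzero `u ∈ L¹ ∩ L²(ℝ^d)`,
`log(‖u‖₂²/‖u‖₁) ≤ (∫ log|u| · |u|² dx) / ‖u‖₂²`, provided the integral exists. -/
theorem beckner_jensen (d : ℕ) (hd : 1 ≤ d)
    (u : EuclideanSpace ℝ (Fin d) → ℝ)
    (hu1 : MemLp u 1 volume) (hu2 : MemLp u 2 volume)
    (hne : nrm d u 2 ≠ 0)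
    (hint : Integrable (fun x => Real.log |u x| * (u x) ^ 2) volume) :
    Real.log (nrm d u 2 ^ 2 / nrm d u 1) ≤
      (∫ x, Real.log |u x| * (u x) ^ 2) / nrm d u 2 ^ 2 :=
  beckner_jensen_general d u hu1 hu2 hne hint
end
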